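/- Let K be a field, char K ≠ 2, c ∈ K nonzero, H̃ = (x₁x₃ + c·x₂x₄, x₂x₃ − x₁x₄, ½x₃² + (c/2)x₄², ½x₁² + (c/2)x₂²), and let M ∈ Mat₄(K) be a constant matrix such that deg det(J H̃ + M) ≤ 2. Then there exists a translation G(x) = x + w (w ∈ K⁴) such that H̃(G(x)) − (H̃(x) + Mx) is a constant vector in K⁴. In particular det(J H̃ + M) = 0. -/

import Mathlib

open MvPolynomial

/-- The Jacobian matrix of a polynomial map. -/
noncomputable def jacobian {K : Type*} [Field K] {m n : ℕ}
    (H : Fin m → MvPolynomial (Fin n) K) :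
    Matrix (Fin m) (Fin n) (MvPolynomial (Fin n) K) :=
  fun i j => pderiv j (H i)

/-- The map `H̃ = (x₁x₃ + c x₂x₄, x₂x₃ − x₁x₄, ½x₃² + (c/2)x₄², ½x₁² + (c/2)x₂²)`. -/
noncomputable def Hmap {K : Type*} [Field K] (c : K) : Fin 4 → MvPolynomial (Fin 4) K :=
  ![X 0 * X 2 + C c * (X 1 * X 3),
    X 1 * X 2 - X 0 * X 3,
    C (2 : K)⁻¹ * X 2 ^ 2 + C (c / 2) * X 3 ^ 2,
    C (2 : K)⁻¹ * X 0 ^ 2 + C (c / 2) * X 1 ^ 2]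

theorem det_fin_four' {R : Type*} [CommRing R] (A : Matrix (Fin 4) (Fin 4) R) :
    A.det = A 0 0*A 1 1*A 2 2*A 3 3 - A 0 0*A 1 1*A 2 3*A 3 2 - A 0 0*A 1 2*A 2 1*A 3 3 + A 0 0*A 1 2*A 2 3*A 3 1 + A 0 0*A 1 3*A 2 1*A 3 2 - A 0 0*A 1 3*A 2 2*A 3 1 - A 0 1*A 1 0*A 2 2*A 3 3 + A 0 1*A 1 0*A 2 3*A 3 2 + A 0 1*A 1 2*A 2 0*A 3 3 - A 0 1*A 1 2*A 2 3*A 3 0 - A 0 1*A 1 3*A 2 0*A 3 2 + A 0 1*A 1 3*A 2 2*A 3 0 + A 0 2*A 1 0*A 2 1*A 3 3 - A 0 2*A 1 0*A 2 3*A 3 1 - A 0 2*A 1 1*A 2 0*A 3 3 + A 0 2*A 1 1*A 2 3*A 3 0 + A 0 2*A 1 3*A 2 0*A 3 1 - A 0 2*A 1 3*A 2 1*A 3 0 - A 0 3*A 1 0*A 2 1*A 3 2 + A 0 3*A 1 0*A 2 2*A 3 1 + A 0 3*A 1 1*A 2 0*A 3 2 - A 0 3*A 1 1*A 2 2*A 3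 0 - A 0 3*A 1 2*A 2 0*A 3 1 + A 0 3*A 1 2*A 2 1*A 3 0 := by
  rw [Matrix.det_succ_row_zero]
  simp [Fin.sum_univ_succ, Matrix.det_fin_three, Matrix.submatrix_apply, Fin.succAbove]
  ring

theorem degsum (μ : Fin 4 →₀ ℕ) : ∑ i ∈ μ.support, μ i = μ 0 + μ 1 + μ 2 + μ 3 := by
  rw [show ∑ i ∈ μ.support, μ i = μ.sum fun _ a => a from rfl,
    Finsupp.sum_fintype _ _ (fun _ => rfl), Fin.sum_univ_four]

set_option maxHeartbeats 4000000 in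
/-- Lemma 4.4: if `M ∈ Mat₄(K)` is such that `deg det(J H̃ + M) ≤ 2`, then there is a
translation `G(x) = x + w` with `H̃(G(x)) − (H̃(x) + Mx)` constant; in particular
`det(J H̃ + M) = 0`. -/
theorem Hmap_translation_lemma {K : Type*} [Field K] (hchar : (2 : K) ≠ 0)
    (c : K) (hc : c ≠ 0) (M : Matrix (Fin 4) (Fin 4) K)
    (hdeg : (jacobian (Hmap c) + M.map (C : K →+* MvPolynomial (Fin 4) K)).det.totalDegree
      ≤ 2) :
    (∃ w : Fin 4 → K, ∃ k : Fin 4 → K, ∀ i,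
      bind₁ (fun j : Fin 4 => (X j : MvPolynomial (Fin 4) K) + C (w j)) (Hmap c i) -
        (Hmap c i + ∑ j, C (M i j) * X j) = C (k i)) ∧
    (jacobian (Hmap c) + M.map (C : K →+* MvPolynomial (Fin 4) K)).det = 0 := by
  have hC2 : (C ((2:K)⁻¹) : MvPolynomial (Fin 4) K) * 2 = 1 := by
    rw [show (2 : MvPolynomial (Fin 4) K) = C 2 from (map_ofNat C 2).symm, ← C_mul,
      inv_mul_cancel₀ hchar, C_1]
  have hcc : (C (c/2) : MvPolynomial (Fin 4) K) * 2 = C c := by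
    rw [show (2 : MvPolynomial (Fin 4) K) = C 2 from (map_ofNat C 2).symm, ← C_mul,
      div_mul_cancel₀ _ hchar]
  have h00 : jacobian (Hmap c) 0 0 = X 2 := by
    simp [jacobian, Hmap, pderiv_mul, pderiv_X_self, pderiv_X_of_ne]
  have h01 : jacobian (Hmap c) 0 1 = C c * X 3 := by
    simp [jacobian, Hmap, pderiv_mul, pderiv_X_self, pderiv_X_of_ne]
  have h02 : jacobian (Hmap c) 0 2 = X 0 := by
    simp [jacobian, Hmap, pderiv_mul, pderiv_X_self, pderiv_X_of_ne]
  have h03 : jacobian (Hmap c) 0 3 = C c * X 1 := by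
    simp [jacobian, Hmap, pderiv_mul, pderiv_X_self, pderiv_X_of_ne]
  have h10 : jacobian (Hmap c) 1 0 = -X 3 := by
    simp [jacobian, Hmap, pderiv_mul, pderiv_X_self, pderiv_X_of_ne]
  have h11 : jacobian (Hmap c) 1 1 = X 2 := by
    simp [jacobian, Hmap, pderiv_mul, pderiv_X_self, pderiv_X_of_ne]
  have h12 : jacobian (Hmap c) 1 2 = X 1 := by
    simp [jacobian, Hmap, pderiv_mul, pderiv_X_self, pderiv_X_of_ne]
  have h13 : jacobian (Hmap c) 1 3 = -X 0 := by
    simp [jacobian, Hmap, pderiv_mul, pderiv_X_self, pderiv_X_of_ne]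
  have h20 : jacobian (Hmap c) 2 0 = (0:MvPolynomial (Fin 4) K) := by
    simp [jacobian, Hmap, pderiv_mul, pderiv_X_self, pderiv_X_of_ne, pderiv_pow,
      Nat.cast_ofNat]
  have h21 : jacobian (Hmap c) 2 1 = (0:MvPolynomial (Fin 4) K) := by
    simp [jacobian, Hmap, pderiv_mul, pderiv_X_self, pderiv_X_of_ne, pderiv_pow,
      Nat.cast_ofNat]
  have h22 : jacobian (Hmap c) 2 2 = X 2 := by
    simp [jacobian, Hmap, pderiv_mul, pderiv_X_self, pderiv_X_of_ne, pderiv_pow,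
      Nat.cast_ofNat]
    linear_combination (X 2 : MvPolynomial (Fin 4) K) * hC2
  have h23 : jacobian (Hmap c) 2 3 = C c * X 3 := by
    simp [jacobian, Hmap, pderiv_mul, pderiv_X_self, pderiv_X_of_ne, pderiv_pow,
      Nat.cast_ofNat]
    linear_combination (X 3 : MvPolynomial (Fin 4) K) * hcc
  have h30 : jacobian (Hmap c) 3 0 = X 0 := by
    simp [jacobian, Hmap, pderiv_mul, pderiv_X_self, pderiv_X_of_ne, pderiv_pow,
      Nat.cast_ofNat]
    linear_combination (X 0 : MvPolynomial (Fin 4) K) * hC2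
  have h31 : jacobian (Hmap c) 3 1 = C c * X 1 := by
    simp [jacobian, Hmap, pderiv_mul, pderiv_X_self, pderiv_X_of_ne, pderiv_pow,
      Nat.cast_ofNat]
    linear_combination (X 1 : MvPolynomial (Fin 4) K) * hcc
  have h32 : jacobian (Hmap c) 3 2 = (0:MvPolynomial (Fin 4) K) := by
    simp [jacobian, Hmap, pderiv_mul, pderiv_X_self, pderiv_X_of_ne, pderiv_pow,
      Nat.cast_ofNat]
  have h33 : jacobian (Hmap c) 3 3 = (0:MvPolynomial (Fin 4) K) := by
    simp [jacobian, Hmap, pderiv_mul, pderiv_X_self, pderiv_X_of_ne, pderiv_pow,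
      Nat.cast_ofNat]
  set Dt := (jacobian (Hmap c) + M.map (C : K →+* MvPolynomial (Fin 4) K)).det with hDt
  have hD : Dt =
        C (-(c ^ 2 * M 3 2)) * (X 3 ^ 3)
        + C (c * M 3 3) * (X 2 ^ 1 * X 3 ^ 2)
        + C (-(c * M 3 2)) * (X 2 ^ 2 * X 3 ^ 1)
        + C (M 3 3) * (X 2 ^ 3)
        + C (-(c ^ 2 * M 3 0) + c ^ 2 * M 0 2) * (X 1 ^ 1 * X 3 ^ 2)
        + C (-(c * M 0 3) + c ^ 2 * M 1 2) * (X 1 ^ 1 * X 2 ^ 1 * X 3 ^ 1)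
        + C (-(c * M 3 0) - c * M 1 3) * (X 1 ^ 1 * X 2 ^ 2)
        + C (-(c ^ 2 * M 2 2) + c ^ 2 * M 0 0) * (X 1 ^ 2 * X 3 ^ 1)
        + C (c * M 2 3 + c ^ 2 * M 1 0) * (X 1 ^ 2 * X 2 ^ 1)
        + C (-(c ^ 2 * M 2 0)) * (X 1 ^ 3)
        + C (c * M 3 1 - c ^ 2 * M 1 2) * (X 0 ^ 1 * X 3 ^ 2)
        + C (c * M 1 3 + c * M 0 2) * (X 0 ^ 1 * X 2 ^ 1 * X 3 ^ 1)
        + C (M 3 1 - M 0 3) * (X 0 ^ 1 * X 2 ^ 2)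
        + C (-(c * M 0 1) - c ^ 2 * M 1 0) * (X 0 ^ 1 * X 1 ^ 1 * X 3 ^ 1)
        + C (-(c * M 1 1) + c * M 0 0) * (X 0 ^ 1 * X 1 ^ 1 * X 2 ^ 1)
        + C (c * M 2 1) * (X 0 ^ 1 * X 1 ^ 2)
        + C (-(c * M 2 2) + c * M 1 1) * (X 0 ^ 2 * X 3 ^ 1)
        + C (M 2 3 - M 0 1) * (X 0 ^ 2 * X 2 ^ 1)
        + C (-(c * M 2 0)) * (X 0 ^ 2 * X 1 ^ 1)
        + C (M 2 1) * (X 0 ^ 3)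
        + C (-(c * M 2 3 * M 3 2) + c * M 2 2 * M 3 3 + c * M 0 2 * M 3 1 - c * M 0 1 * M 3 2 - c ^ 2 * M 1 2 * M 3 0 + c ^ 2 * M 1 0 * M 3 2) * (X 3 ^ 2)
        + C (-(M 0 3 * M 3 1) + M 0 1 * M 3 3 + c * M 1 3 * M 3 0 + c * M 1 2 * M 3 1 - c * M 1 1 * M 3 2 - c * M 1 0 * M 3 3 + c * M 0 2 * M 3 0 - c * M 0 0 * M 3 2) * (X 2 ^ 1 * X 3 ^ 1)
        + C (-(M 2 3 * M 3 2) + M 2 2 * M 3 3 - M 1 3 * M 3 1 + M 1 1 * M 3 3 - M 0 3 * M 3 0 + M 0 0 * M 3 3) * (X 2 ^ 2)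
        + C (-(c * M 2 3 * M 3 0) - c * M 2 2 * M 3 1 + c * M 2 1 * M 3 2 + c * M 2 0 * M 3 3 - c * M 0 3 * M 2 2 + c * M 0 2 * M 2 3 - c * M 0 1 * M 3 0 + c * M 0 0 * M 3 1 - c ^ 2 * M 0 2 * M 1 0 + c ^ 2 * M 0 0 * M 1 2) * (X 1 ^ 1 * X 3 ^ 1)
        + C (M 2 3 * M 3 1 - M 2 1 * M 3 3 - c * M 2 2 * M 3 0 + c * M 2 0 * M 3 2 - c * M 1 3 * M 2 2 + c * M 1 2 * M 2 3 - c * M 1 1 * M 3 0 + c * M 1 0 * M 3 1 + c * M 0 3 * M 1 0 - c * M 0 0 * M 1 3) * (X 1 ^ 1 * X 2 ^ 1)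
        + C (c * M 2 1 * M 3 0 - c * M 2 0 * M 3 1 - c * M 0 3 * M 2 0 + c * M 0 0 * M 2 3 - c ^ 2 * M 1 2 * M 2 0 + c ^ 2 * M 1 0 * M 2 2) * (X 1 ^ 2)
        + C (M 2 3 * M 3 1 - M 2 1 * M 3 3 - c * M 2 2 * M 3 0 + c * M 2 0 * M 3 2 + c * M 1 3 * M 2 2 - c * M 1 2 * M 2 3 + c * M 1 1 * M 3 0 - c * M 1 0 * M 3 1 + c * M 0 2 * M 1 1 - c * M 0 1 * M 1 2) * (X 0 ^ 1 * X 3 ^ 1)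
        + C (M 2 3 * M 3 0 + M 2 2 * M 3 1 - M 2 1 * M 3 2 - M 2 0 * M 3 3 - M 0 3 * M 2 2 - M 0 3 * M 1 1 + M 0 2 * M 2 3 - M 0 1 * M 3 0 + M 0 1 * M 1 3 + M 0 0 * M 3 1) * (X 0 ^ 1 * X 2 ^ 1)
        + C (M 0 3 * M 2 1 - M 0 1 * M 2 3 + c * M 1 3 * M 2 0 + c * M 1 2 * M 2 1 - c * M 1 1 * M 2 2 - c * M 1 0 * M 2 3 - c * M 0 2 * M 2 0 + c * M 0 0 * M 2 2) * (X 0 ^ 1 * X 1 ^ 1)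
        + C (M 2 1 * M 3 0 - M 2 0 * M 3 1 - M 1 3 * M 2 1 + M 1 1 * M 2 3 + M 0 2 * M 2 1 - M 0 1 * M 2 2) * (X 0 ^ 2)
        + C (-(M 0 3 * M 2 2 * M 3 1) + M 0 3 * M 2 1 * M 3 2 + M 0 2 * M 2 3 * M 3 1 - M 0 2 * M 2 1 * M 3 3 - M 0 1 * M 2 3 * M 3 2 + M 0 1 * M 2 2 * M 3 3 + c * M 1 3 * M 2 2 * M 3 0 - c * M 1 3 * M 2 0 * M 3 2 - c * M 1 2 * M 2 3 * M 3 0 + c * M 1 2 * M 2 0 * M 3 3 + c * M 1 0 * M 2 3 * M 3 2 - c * M 1 0 * M 2 2 * M 3 3 + c * M 0 2 * M 1 1 * M 3 0 - c * M 0 2 * M 1 0 * M 3 1 - c * M 0 1 * M 1 2 * M 3 0 + c * M 0 1 * M 1 0 * M 3 2 + c * M 0 0 * M 1 2 * M 3 1 - c * M 0 0 * M 1 1 * M 3 2) * (X 3 ^ 1)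
        + C (-(M 1 3 * M 2 2 * M 3 1) + M 1 3 * M 2 1 * M 3 2 + M 1 2 * M 2 3 * M 3 1 - M 1 2 * M 2 1 * M 3 3 - M 1 1 * M 2 3 * M 3 2 + M 1 1 * M 2 2 * M 3 3 - M 0 3 * M 2 2 * M 3 0 + M 0 3 * M 2 0 * M 3 2 - M 0 3 * M 1 1 * M 3 0 + M 0 3 * M 1 0 * M 3 1 + M 0 2 * M 2 3 * M 3 0 - M 0 2 * M 2 0 * M 3 3 + M 0 1 * M 1 3 * M 3 0 - M 0 1 * M 1 0 * M 3 3 - M 0 0 * M 2 3 * M 3 2 + M 0 0 * M 2 2 * M 3 3 - M 0 0 * M 1 3 * M 3 1 + M 0 0 * M 1 1 * M 3 3) * (X 2 ^ 1)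
        + C (M 0 3 * M 2 1 * M 3 0 - M 0 3 * M 2 0 * M 3 1 - M 0 1 * M 2 3 * M 3 0 + M 0 1 * M 2 0 * M 3 3 + M 0 0 * M 2 3 * M 3 1 - M 0 0 * M 2 1 * M 3 3 + c * M 1 2 * M 2 1 * M 3 0 - c * M 1 2 * M 2 0 * M 3 1 - c * M 1 1 * M 2 2 * M 3 0 + c * M 1 1 * M 2 0 * M 3 2 + c * M 1 0 * M 2 2 * M 3 1 - c * M 1 0 * M 2 1 * M 3 2 - c * M 0 3 * M 1 2 * M 2 0 + c * M 0 3 * M 1 0 * M 2 2 + c * M 0 2 * M 1 3 * M 2 0 - c * M 0 2 * M 1 0 * M 2 3 - c * M 0 0 * M 1 3 * M 2 2 + c * M 0 0 * M 1 2 * M 2 3) * (X 1 ^ 1)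
        + C (-(M 1 3 * M 2 1 * M 3 0) + M 1 3 * M 2 0 * M 3 1 + M 1 1 * M 2 3 * M 3 0 - M 1 1 * M 2 0 * M 3 3 - M 1 0 * M 2 3 * M 3 1 + M 1 0 * M 2 1 * M 3 3 + M 0 3 * M 1 2 * M 2 1 - M 0 3 * M 1 1 * M 2 2 + M 0 2 * M 2 1 * M 3 0 - M 0 2 * M 2 0 * M 3 1 - M 0 2 * M 1 3 * M 2 1 + M 0 2 * M 1 1 * M 2 3 - M 0 1 * M 2 2 * M 3 0 + M 0 1 * M 2 0 * M 3 2 + M 0 1 * M 1 3 * M 2 2 - M 0 1 * M 1 2 * M 2 3 + M 0 0 * M 2 2 * M 3 1 - M 0 0 * M 2 1 * M 3 2) * (X 0 ^ 1)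
        + C (M 0 3 * M 1 2 * M 2 1 * M 3 0 - M 0 3 * M 1 2 * M 2 0 * M 3 1 - M 0 3 * M 1 1 * M 2 2 * M 3 0 + M 0 3 * M 1 1 * M 2 0 * M 3 2 + M 0 3 * M 1 0 * M 2 2 * M 3 1 - M 0 3 * M 1 0 * M 2 1 * M 3 2 - M 0 2 * M 1 3 * M 2 1 * M 3 0 + M 0 2 * M 1 3 * M 2 0 * M 3 1 + M 0 2 * M 1 1 * M 2 3 * M 3 0 - M 0 2 * M 1 1 * M 2 0 * M 3 3 - M 0 2 * M 1 0 * M 2 3 * M 3 1 + M 0 2 * M 1 0 * M 2 1 * M 3 3 + M 0 1 * M 1 3 * M 2 2 * M 3 0 - M 0 1 * M 1 3 * M 2 0 * M 3 2 - M 0 1 * M 1 2 * M 2 3 * M 3 0 + M 0 1 * M 1 2 * M 2 0 * M 3 3 + M 0 1 * M 1 0 * M 2 3 * M 3 2 - M 0 1 * M 1 0 * M 2 2 * M 3 3 - M 0 0 * M 1 3 * M 2 2 * M 3 1 + M 0 0 * M 1 3 * M 2 1 * M 3 2 + M 0 0 * M 1 2 * M 2 3 * M 3 1 - M 0 0 *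 M 1 2 * M 2 1 * M 3 3 - M 0 0 * M 1 1 * M 2 3 * M 3 2 + M 0 0 * M 1 1 * M 2 2 * M 3 3) := by
    rw [hDt, det_fin_four']
    simp only [Matrix.add_apply, Matrix.map_apply, h00, h01, h02, h03, h10, h11, h12, h13,
      h20, h21, h22, h23, h30, h31, h32, h33, map_add, map_sub, map_neg, map_mul, map_pow]
    ring
  have eA : coeff (Finsupp.single (0:Fin 4) 3) Dt = M 2 1 := by
    rw [hD]
    simp only [coeff_add, X_pow_eq_monomial, monomial_mul, C_mul_monomial, coeff_monomial,
      coeff_C, mul_one, one_mul, Finsupp.ext_iff, Finsupp.add_apply, Finsupp.single_apply,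
      Finsupp.coe_zero, Pi.zero_apply]
    simp [Fin.forall_fin_succ, show (2:Fin 3).succ = (3:Fin 4) by decide]
    try ring
  have dA : coeff (Finsupp.single (0:Fin 4) 3) Dt = 0 := by
    apply coeff_eq_zero_of_totalDegree_lt
    refine lt_of_le_of_lt hdeg ?_
    rw [degsum]
    simp [Finsupp.add_apply, Finsupp.single_apply]
  have tA := eA.symm.trans dA
  have eB : coeff (Finsupp.single (0:Fin 4) 2 + Finsupp.single (1:Fin 4) 1) Dt = -(c * M 2 0) := by
    rw [hD]
    simp only [coeff_add, X_pow_eq_monomial, monomial_mul, C_mul_monomial, coeff_monomial,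
      coeff_C, mul_one, one_mul, Finsupp.ext_iff, Finsupp.add_apply, Finsupp.single_apply,
      Finsupp.coe_zero, Pi.zero_apply]
    simp [Fin.forall_fin_succ, show (2:Fin 3).succ = (3:Fin 4) by decide]
    try ring
  have dB : coeff (Finsupp.single (0:Fin 4) 2 + Finsupp.single (1:Fin 4) 1) Dt = 0 := by
    apply coeff_eq_zero_of_totalDegree_lt
    refine lt_of_le_of_lt hdeg ?_
    rw [degsum]
    simp [Finsupp.add_apply, Finsupp.single_apply]
  have tB := eB.symm.trans dB
  have eC : coeff (Finsupp.single (2:Fin 4) 3) Dt = M 3 3 := by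
    rw [hD]
    simp only [coeff_add, X_pow_eq_monomial, monomial_mul, C_mul_monomial, coeff_monomial,
      coeff_C, mul_one, one_mul, Finsupp.ext_iff, Finsupp.add_apply, Finsupp.single_apply,
      Finsupp.coe_zero, Pi.zero_apply]
    simp [Fin.forall_fin_succ, show (2:Fin 3).succ = (3:Fin 4) by decide]
    try ring
  have dC : coeff (Finsupp.single (2:Fin 4) 3) Dt = 0 := by
    apply coeff_eq_zero_of_totalDegree_lt
    refine lt_of_le_of_lt hdeg ?_
    rw [degsum]
    simp [Finsupp.add_apply, Finsupp.single_apply]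
  have tC := eC.symm.trans dC
  have eD : coeff (Finsupp.single (2:Fin 4) 2 + Finsupp.single (3:Fin 4) 1) Dt = -(c * M 3 2) := by
    rw [hD]
    simp only [coeff_add, X_pow_eq_monomial, monomial_mul, C_mul_monomial, coeff_monomial,
      coeff_C, mul_one, one_mul, Finsupp.ext_iff, Finsupp.add_apply, Finsupp.single_apply,
      Finsupp.coe_zero, Pi.zero_apply]
    simp [Fin.forall_fin_succ, show (2:Fin 3).succ = (3:Fin 4) by decide]
    try ring
  have dD : coeff (Finsupp.single (2:Fin 4) 2 + Finsupp.single (3:Fin 4) 1) Dt = 0 := by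
    apply coeff_eq_zero_of_totalDegree_lt
    refine lt_of_le_of_lt hdeg ?_
    rw [degsum]
    simp [Finsupp.add_apply, Finsupp.single_apply]
  have tD := eD.symm.trans dD
  have eE : coeff (Finsupp.single (0:Fin 4) 1 + Finsupp.single (1:Fin 4) 1 + Finsupp.single (2:Fin 4) 1) Dt = c * M 0 0 - c * M 1 1 := by
    rw [hD]
    simp only [coeff_add, X_pow_eq_monomial, monomial_mul, C_mul_monomial, coeff_monomial,
      coeff_C, mul_one, one_mul, Finsupp.ext_iff, Finsupp.add_apply, Finsupp.single_apply,
      Finsupp.coe_zero, Pi.zero_apply]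
    simp [Fin.forall_fin_succ, show (2:Fin 3).succ = (3:Fin 4) by decide]
    try ring
  have dE : coeff (Finsupp.single (0:Fin 4) 1 + Finsupp.single (1:Fin 4) 1 + Finsupp.single (2:Fin 4) 1) Dt = 0 := by
    apply coeff_eq_zero_of_totalDegree_lt
    refine lt_of_le_of_lt hdeg ?_
    rw [degsum]
    simp [Finsupp.add_apply, Finsupp.single_apply]
  have tE := eE.symm.trans dE
  have eF : coeff (Finsupp.single (0:Fin 4) 2 + Finsupp.single (3:Fin 4) 1) Dt = c * M 1 1 - c * M 2 2 := by
    rw [hD]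
    simp only [coeff_add, X_pow_eq_monomial, monomial_mul, C_mul_monomial, coeff_monomial,
      coeff_C, mul_one, one_mul, Finsupp.ext_iff, Finsupp.add_apply, Finsupp.single_apply,
      Finsupp.coe_zero, Pi.zero_apply]
    simp [Fin.forall_fin_succ, show (2:Fin 3).succ = (3:Fin 4) by decide]
    try ring
  have dF : coeff (Finsupp.single (0:Fin 4) 2 + Finsupp.single (3:Fin 4) 1) Dt = 0 := by
    apply coeff_eq_zero_of_totalDegree_lt
    refine lt_of_le_of_lt hdeg ?_
    rw [degsum]
    simp [Finsupp.add_apply, Finsupp.single_apply]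
  have tF := eF.symm.trans dF
  have eG : coeff (Finsupp.single (0:Fin 4) 1 + Finsupp.single (1:Fin 4) 1 + Finsupp.single (3:Fin 4) 1) Dt = -(c * M 0 1) - c ^ 2 * M 1 0 := by
    rw [hD]
    simp only [coeff_add, X_pow_eq_monomial, monomial_mul, C_mul_monomial, coeff_monomial,
      coeff_C, mul_one, one_mul, Finsupp.ext_iff, Finsupp.add_apply, Finsupp.single_apply,
      Finsupp.coe_zero, Pi.zero_apply]
    simp [Fin.forall_fin_succ, show (2:Fin 3).succ = (3:Fin 4) by decide]
    try ring
  have dG : coeff (Finsupp.single (0:Fin 4) 1 + Finsupp.single (1:Fin 4) 1 + Finsupp.single (3:Fin 4) 1) Dt = 0 := by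
    apply coeff_eq_zero_of_totalDegree_lt
    refine lt_of_le_of_lt hdeg ?_
    rw [degsum]
    simp [Finsupp.add_apply, Finsupp.single_apply]
  have tG := eG.symm.trans dG
  have eH : coeff (Finsupp.single (0:Fin 4) 2 + Finsupp.single (2:Fin 4) 1) Dt = M 2 3 - M 0 1 := by
    rw [hD]
    simp only [coeff_add, X_pow_eq_monomial, monomial_mul, C_mul_monomial, coeff_monomial,
      coeff_C, mul_one, one_mul, Finsupp.ext_iff, Finsupp.add_apply, Finsupp.single_apply,
      Finsupp.coe_zero, Pi.zero_apply]
    simp [Fin.forall_fin_succ, show (2:Fin 3).succ = (3:Fin 4) by decide]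
    try ring
  have dH : coeff (Finsupp.single (0:Fin 4) 2 + Finsupp.single (2:Fin 4) 1) Dt = 0 := by
    apply coeff_eq_zero_of_totalDegree_lt
    refine lt_of_le_of_lt hdeg ?_
    rw [degsum]
    simp [Finsupp.add_apply, Finsupp.single_apply]
  have tH := eH.symm.trans dH
  have eI : coeff (Finsupp.single (1:Fin 4) 1 + Finsupp.single (2:Fin 4) 1 + Finsupp.single (3:Fin 4) 1) Dt = c ^ 2 * M 1 2 - c * M 0 3 := by
    rw [hD]
    simp only [coeff_add, X_pow_eq_monomial, monomial_mul, C_mul_monomial, coeff_monomial,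
      coeff_C, mul_one, one_mul, Finsupp.ext_iff, Finsupp.add_apply, Finsupp.single_apply,
      Finsupp.coe_zero, Pi.zero_apply]
    simp [Fin.forall_fin_succ, show (2:Fin 3).succ = (3:Fin 4) by decide]
    try ring
  have dI : coeff (Finsupp.single (1:Fin 4) 1 + Finsupp.single (2:Fin 4) 1 + Finsupp.single (3:Fin 4) 1) Dt = 0 := by
    apply coeff_eq_zero_of_totalDegree_lt
    refine lt_of_le_of_lt hdeg ?_
    rw [degsum]
    simp [Finsupp.add_apply, Finsupp.single_apply]
  have tI := eI.symm.trans dI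
  have eJ : coeff (Finsupp.single (0:Fin 4) 1 + Finsupp.single (2:Fin 4) 2) Dt = M 3 1 - M 0 3 := by
    rw [hD]
    simp only [coeff_add, X_pow_eq_monomial, monomial_mul, C_mul_monomial, coeff_monomial,
      coeff_C, mul_one, one_mul, Finsupp.ext_iff, Finsupp.add_apply, Finsupp.single_apply,
      Finsupp.coe_zero, Pi.zero_apply]
    simp [Fin.forall_fin_succ, show (2:Fin 3).succ = (3:Fin 4) by decide]
    try ring
  have dJ : coeff (Finsupp.single (0:Fin 4) 1 + Finsupp.single (2:Fin 4) 2) Dt = 0 := by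
    apply coeff_eq_zero_of_totalDegree_lt
    refine lt_of_le_of_lt hdeg ?_
    rw [degsum]
    simp [Finsupp.add_apply, Finsupp.single_apply]
  have tJ := eJ.symm.trans dJ
  have eK : coeff (Finsupp.single (1:Fin 4) 1 + Finsupp.single (3:Fin 4) 2) Dt = c ^ 2 * M 0 2 - c ^ 2 * M 3 0 := by
    rw [hD]
    simp only [coeff_add, X_pow_eq_monomial, monomial_mul, C_mul_monomial, coeff_monomial,
      coeff_C, mul_one, one_mul, Finsupp.ext_iff, Finsupp.add_apply, Finsupp.single_apply,
      Finsupp.coe_zero, Pi.zero_apply]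
    simp [Fin.forall_fin_succ, show (2:Fin 3).succ = (3:Fin 4) by decide]
    try ring
  have dK : coeff (Finsupp.single (1:Fin 4) 1 + Finsupp.single (3:Fin 4) 2) Dt = 0 := by
    apply coeff_eq_zero_of_totalDegree_lt
    refine lt_of_le_of_lt hdeg ?_
    rw [degsum]
    simp [Finsupp.add_apply, Finsupp.single_apply]
  have tK := eK.symm.trans dK
  have eL : coeff (Finsupp.single (0:Fin 4) 1 + Finsupp.single (2:Fin 4) 1 + Finsupp.single (3:Fin 4) 1) Dt = c * M 1 3 + c * M 0 2 := by
    rw [hD]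
    simp only [coeff_add, X_pow_eq_monomial, monomial_mul, C_mul_monomial, coeff_monomial,
      coeff_C, mul_one, one_mul, Finsupp.ext_iff, Finsupp.add_apply, Finsupp.single_apply,
      Finsupp.coe_zero, Pi.zero_apply]
    simp [Fin.forall_fin_succ, show (2:Fin 3).succ = (3:Fin 4) by decide]
    try ring
  have dL : coeff (Finsupp.single (0:Fin 4) 1 + Finsupp.single (2:Fin 4) 1 + Finsupp.single (3:Fin 4) 1) Dt = 0 := by
    apply coeff_eq_zero_of_totalDegree_lt
    refine lt_of_le_of_lt hdeg ?_
    rw [degsum]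
    simp [Finsupp.add_apply, Finsupp.single_apply]
  have tL := eL.symm.trans dL
  have r21 : M 2 1 = 0 := tA
  have r20 : M 2 0 = 0 := mul_left_cancel₀ hc (by linear_combination -tB)
  have r33 : M 3 3 = 0 := tC
  have r32 : M 3 2 = 0 := mul_left_cancel₀ hc (by linear_combination -tD)
  have r11 : M 1 1 = M 0 0 := mul_left_cancel₀ hc (by linear_combination -tE)
  have r22 : M 2 2 = M 0 0 := by
    rw [← r11]; exact mul_left_cancel₀ hc (by linear_combination -tF)
  have r01 : M 0 1 = -(c * M 1 0) := mul_left_cancel₀ hc (by linear_combination -tG)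
  have r23 : M 2 3 = -(c * M 1 0) := by rw [← r01]; linear_combination tH
  have r03 : M 0 3 = c * M 1 2 := mul_left_cancel₀ hc (by linear_combination -tI)
  have r31 : M 3 1 = c * M 1 2 := by rw [← r03]; linear_combination tJ
  have r30 : M 3 0 = M 0 2 := mul_left_cancel₀ hc (mul_left_cancel₀ hc (by linear_combination -tK))
  have r13 : M 1 3 = -M 0 2 := mul_left_cancel₀ hc (by linear_combination tL)
  constructor
  · refine ⟨![M 0 2, M 1 2, M 0 0, -M 1 0], ![M 0 0 * M 0 2 - c * M 1 0 * M 1 2, M 0 0 * M 1 2 + M 0 2 * M 1 0, (2:K)⁻¹ * M 0 0 ^ 2 + c / 2 * M 1 0 ^ 2, (2:K)⁻¹ * M 0 2 ^ 2 + c / 2 * M 1 2 ^ 2], ?_⟩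
    intro i
    fin_cases i
    · show bind₁ (fun j : Fin 4 => (X j : MvPolynomial (Fin 4) K) + C (![M 0 2, M 1 2, M 0 0, -M 1 0] j)) (Hmap c 0) -
          (Hmap c 0 + ∑ j, C (M 0 j) * X j) = C (M 0 0 * M 0 2 - c * M 1 0 * M 1 2)
      simp [Hmap, bind₁_X_right, bind₁_C_right, map_add, map_mul, map_sub, map_pow,
        Fin.sum_univ_four]
      rw [r01, r03]
      simp only [map_neg, map_zero, map_add, C_mul, C_add, C_pow, C_0]
      ring
    · show bind₁ (fun j : Fin 4 => (X j : MvPolynomial (Fin 4) K) + C (![M 0 2, M 1 2, M 0 0, -M 1 0] j)) (Hmap c 1) -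
          (Hmap c 1 + ∑ j, C (M 1 j) * X j) = C (M 0 0 * M 1 2 + M 0 2 * M 1 0)
      simp [Hmap, bind₁_X_right, bind₁_C_right, map_add, map_mul, map_sub, map_pow,
        Fin.sum_univ_four]
      rw [r11, r13]
      simp only [map_neg, map_zero, map_add, C_mul, C_add, C_pow, C_0]
      ring
    · show bind₁ (fun j : Fin 4 => (X j : MvPolynomial (Fin 4) K) + C (![M 0 2, M 1 2, M 0 0, -M 1 0] j)) (Hmap c 2) -
          (Hmap c 2 + ∑ j, C (M 2 j) * X j) = C ((2:K)⁻¹ * M 0 0 ^ 2 + c / 2 * M 1 0 ^ 2)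
      simp [Hmap, bind₁_X_right, bind₁_C_right, map_add, map_mul, map_sub, map_pow,
        Fin.sum_univ_four]
      rw [r20, r21, r22, r23]
      simp only [map_neg, map_zero, map_add, C_mul, C_add, C_pow, C_0]
      linear_combination (C (M 0 0) * X 2 : MvPolynomial (Fin 4) K) * hC2 -
        (C (M 1 0) * X 3 : MvPolynomial (Fin 4) K) * hcc
    · show bind₁ (fun j : Fin 4 => (X j : MvPolynomial (Fin 4) K) + C (![M 0 2, M 1 2, M 0 0, -M 1 0] j)) (Hmap c 3) -
          (Hmap c 3 + ∑ j, C (M 3 j) * X j) = C ((2:K)⁻¹ * M 0 2 ^ 2 + c / 2 * M 1 2 ^ 2)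
      simp [Hmap, bind₁_X_right, bind₁_C_right, map_add, map_mul, map_sub, map_pow,
        Fin.sum_univ_four]
      rw [r30, r31, r32, r33]
      simp only [map_neg, map_zero, map_add, C_mul, C_add, C_pow, C_0]
      linear_combination (C (M 0 2) * X 0 : MvPolynomial (Fin 4) K) * hC2 +
        (C (M 1 2) * X 1 : MvPolynomial (Fin 4) K) * hcc
  · rw [hD, r01, r03, r11, r13, r20, r21, r22, r23, r30, r31, r32, r33]
    simp only [map_add, map_sub, map_neg, map_mul, map_pow, map_zero, C_0]
    ring
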